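/- arXiv:2211.06504 — 2 statements merged into one kernel-verified Lean document; each statement's English description precedes it below -/
import Mathlib

section
/- For positive integers a, b, the quantity 12ab/gcd(a,b)² · ∫₀¹ ((ax))((bx)) dx is an integer (in fact it equals 1). -/
/-!
Write `a = d a'`, `b = d b'` with `a', b'` coprime. Since `u ↦ ((a'u))((b'u))` has period 1,
the substitution `u = d x` reduces the integral to the coprime case.

For coprime `a, b`, substitute `u = abx` and cut `[0, ab]` into unit intervals:
`∫₀¹ ((ax))((bx)) dx = (ab)⁻¹ ∫₀¹ ∑_{k<ab} (((u+k)/b))(((u+k)/a)) du`. By the Chinese remainder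
theorem `k ↦ (k mod a, k mod b)` is a bijection `[0, ab) → [0, a) × [0, b)`, so the sum factors as
`(∑_{i<a} (((u+i)/a))) (∑_{j<b} (((u+j)/b)))`, and for `0 < u < 1` each factor equals `u - 1/2`.
Hence the integral is `(ab)⁻¹ ∫₀¹ (u - 1/2)² du = 1/(12ab)`.
-/

open Real

/-- The sawtooth (first Bernoulli) function `((x))`. -/
noncomputable def saw (x : ℝ) : ℝ := if Int.fract x = 0 then 0 else Int.fract x - 1/2

open Finset MeasureTheory intervalIntegral

theorem Function.Periodic.comp_natCast_mul {α : Type*} {f : ℝ → α} (hf : Function.Periodic f 1)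
    (n : ℕ) : Function.Periodic (fun x => f (n * x)) 1 := fun x => by
  simpa [mul_add] using hf.nat_mul n (n * x)

theorem Function.Periodic.intervalIntegral_comp_natCast_mul {E : Type*} [NormedAddCommGroup E]
    [NormedSpace ℝ E] {G : ℝ → E} (hG : Function.Periodic G 1)
    (hint : ∀ s t, IntervalIntegrable G volume s t) {n : ℕ} (hn : n ≠ 0) :
    ∫ x in (0:ℝ)..1, G (n * x) = ∫ x in (0:ℝ)..1, G x := by
  have hn' : (n : ℝ) ≠ 0 := Nat.cast_ne_zero.mpr hn
  have hperiods := hG.intervalIntegral_add_zsmul_eq n 0 hint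
  simp only [zero_add, natCast_zsmul, nsmul_eq_mul, mul_one] at hperiods
  rw [integral_comp_mul_left G hn', mul_zero, mul_one, hperiods, ← Nat.cast_smul_eq_nsmul ℝ,
    inv_smul_smul₀ hn']

theorem integral_zero_natCast_eq_sum_integral_add {E : Type*} [NormedAddCommGroup E]
    [NormedSpace ℝ E] {F : ℝ → E} (hF : ∀ s t, IntervalIntegrable F volume s t) (N : ℕ) :
    ∫ u in (0:ℝ)..N, F u = ∑ k ∈ range N, ∫ u in (0:ℝ)..1, F (u + k) := by
  rw [← Nat.cast_zero,
    ← sum_integral_adjacent_intervals (a := fun k : ℕ => (k : ℝ)) fun k _ => hF _ _]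
  refine sum_congr rfl fun k _ => ?_
  rw [integral_comp_add_right, Nat.cast_zero, zero_add, Nat.cast_succ, add_comm]

theorem Nat.Coprime.sum_range_mul_mod_mod {M : Type*} [AddCommMonoid M] {a b : ℕ}
    (h : a.Coprime b) (f : ℕ → ℕ → M) :
    ∑ k ∈ range (a * b), f (k % a) (k % b) = ∑ i ∈ range a, ∑ j ∈ range b, f i j := by
  set residues : ℕ → ℕ × ℕ := fun k => (k % a, k % b)
  have hinj : Set.InjOn residues (range (a * b)) := fun k hk l hl hkl => by
    simp only [residues, Prod.mk.injEq] at hkl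
    exact ((Nat.modEq_and_modEq_iff_modEq_mul h).mp hkl).eq_of_lt_of_lt
      (mem_range.mp hk) (mem_range.mp hl)
  have himage : (range (a * b)).image residues = range a ×ˢ range b := by
    refine eq_of_subset_of_card_le (fun p hp => ?_) ?_
    · obtain ⟨k, hk, rfl⟩ := mem_image.mp hp
      have hab : 0 < a * b := Nat.pos_of_ne_zero (Nat.ne_zero_of_lt (mem_range.mp hk))
      simp only [residues, mem_product, mem_range]
      exact ⟨Nat.mod_lt _ (Nat.pos_of_mul_pos_right hab),
        Nat.mod_lt _ (Nat.pos_of_mul_pos_left hab)⟩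
    · rw [Finset.card_image_of_injOn hinj, card_product, card_range, card_range, card_range]
  rw [← sum_product', ← himage, sum_image hinj]

theorem periodic_saw : Function.Periodic saw 1 := fun x => by
  simp [saw, Int.fract_add_one]

theorem saw_of_mem_Ioo {y : ℝ} (hy : y ∈ Set.Ioo 0 1) : saw y = y - 1/2 := by
  rw [saw, Int.fract_eq_self.mpr ⟨hy.1.le, hy.2⟩, if_neg hy.1.ne']

theorem measurable_saw : Measurable saw :=
  Measurable.ite (measurableSet_eq_fun measurable_fract measurable_const) measurable_const
    (measurable_fract.sub measurable_const)

theorem abs_saw_le (x : ℝ) : |saw x| ≤ 1/2 := by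
  unfold saw
  split_ifs
  · norm_num
  · rw [abs_le]
    constructor <;> linarith [Int.fract_nonneg x, Int.fract_lt_one x]

theorem intervalIntegrable_saw_comp_mul_saw_comp {p q : ℝ → ℝ} (hp : Measurable p)
    (hq : Measurable q) (s t : ℝ) :
    IntervalIntegrable (fun x => saw (p x) * saw (q x)) volume s t := by
  rw [intervalIntegrable_iff]
  refine Measure.integrableOn_of_bounded (M := 1/2 * (1/2)) measure_Ioc_lt_top.ne
    ((measurable_saw.comp hp).mul (measurable_saw.comp hq)).aestronglyMeasurable
    (ae_of_all _ fun x => ?_)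
  rw [norm_mul, Real.norm_eq_abs, Real.norm_eq_abs]
  exact mul_le_mul (abs_saw_le _) (abs_saw_le _) (abs_nonneg _) (by norm_num)

theorem saw_add_natCast_div_eq_mod (u : ℝ) (k n : ℕ) :
    saw ((u + k) / n) = saw ((u + (k % n : ℕ)) / n) := by
  rcases eq_or_ne n 0 with rfl | hn
  · simp
  have hk : (u + k) / n = (u + (k % n : ℕ)) / n + (k / n : ℕ) * 1 := by
    conv_lhs => rw [← Nat.mod_add_div k n]
    push_cast
    field_simp
    ring
  rw [hk, periodic_saw.nat_mul]

theorem sum_saw_add_div {n : ℕ} (hn : 0 < n) {u : ℝ} (hu : u ∈ Set.Ioo 0 1) :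
    ∑ i ∈ range n, saw ((u + i) / n) = u - 1/2 := by
  have hnR : (0 : ℝ) < n := Nat.cast_pos.mpr hn
  have hterm : ∀ i ∈ range n, saw ((u + i) / n) = (u + i) / n - 1/2 := fun i hi => by
    refine saw_of_mem_Ioo ⟨div_pos (add_pos_of_pos_of_nonneg hu.1 i.cast_nonneg) hnR, ?_⟩
    have : (i : ℝ) + 1 ≤ n := by exact_mod_cast mem_range.mp hi
    rw [div_lt_one hnR]
    linarith [hu.2]
  have hgauss := sum_range_id_mul_two n
  rify [Nat.one_le_iff_ne_zero.mpr hn.ne'] at hgauss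
  rw [sum_congr rfl hterm, sum_sub_distrib, ← sum_div, sum_add_distrib, sum_const, card_range,
    sum_const, card_range, nsmul_eq_mul, nsmul_eq_mul]
  field_simp
  linarith

theorem integral_saw_mul_saw_of_coprime {a b : ℕ} (ha : 0 < a) (hb : 0 < b) (h : a.Coprime b) :
    ∫ x in (0:ℝ)..1, saw (a * x) * saw (b * x) = 1 / (12 * a * b) := by
  set F : ℝ → ℝ := fun u => saw (u / b) * saw (u / a)
  have hF : ∀ s t, IntervalIntegrable F volume s t :=
    intervalIntegrable_saw_comp_mul_saw_comp (by fun_prop) (by fun_prop)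
  have hsum : Set.EqOn (fun u => ∑ k ∈ range (a * b), F (u + k)) (fun u => (u - 1/2) ^ 2)
      (Set.Ioo 0 1) := fun u hu => by
    simp only [F]
    rw [sum_congr rfl fun k _ => by
        rw [saw_add_natCast_div_eq_mod u k b, saw_add_natCast_div_eq_mod u k a],
      h.sum_range_mul_mod_mod (fun i j => saw ((u + j) / b) * saw ((u + i) / a)),
      sum_comm, ← sum_mul_sum, sum_saw_add_div hb hu, sum_saw_add_div ha hu, sq]
  calc ∫ x in (0:ℝ)..1, saw (a * x) * saw (b * x)
      = ∫ x in (0:ℝ)..1, F ((a * b : ℕ) * x) := integral_congr fun x _ => by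
        simp only [F]
        push_cast
        field_simp
    _ = ((a * b : ℕ) : ℝ)⁻¹ * ∫ u in (0:ℝ)..1, ∑ k ∈ range (a * b), F (u + k) := by
        rw [integral_comp_mul_left F (Nat.cast_ne_zero.mpr (Nat.mul_pos ha hb).ne'), mul_zero,
          mul_one, integral_zero_natCast_eq_sum_integral_add hF, ← integral_finsetSum fun k _ =>
            intervalIntegrable_saw_comp_mul_saw_comp (by fun_prop) (by fun_prop) _ _,
          smul_eq_mul]
    _ = 1 / (12 * a * b) := by
        rw [integral_congr_Ioo_of_le zero_le_one hsum, integral_comp_sub_right (· ^ 2)]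
        norm_num
        ring

theorem franel_normalized_eq_one (a b : ℕ) (ha : 0 < a) (hb : 0 < b) :
    (12 * a * b : ℝ) / (Nat.gcd a b : ℝ)^2 *
      ∫ x in (0:ℝ)..1, saw (a * x) * saw (b * x) = 1 := by
  obtain ⟨d, a', b', hd, hco, rfl, rfl⟩ := Nat.exists_coprime' (Nat.gcd_pos_of_pos_left b ha)
  have ha' : 0 < a' := Nat.pos_of_mul_pos_right ha
  have hb' : 0 < b' := Nat.pos_of_mul_pos_right hb
  set G : ℝ → ℝ := fun u => saw (a' * u) * saw (b' * u)
  have hG : Function.Periodic G 1 :=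
    (periodic_saw.comp_natCast_mul a').mul (periodic_saw.comp_natCast_mul b')
  have hscale : ∫ x in (0:ℝ)..1, saw ((a' * d : ℕ) * x) * saw ((b' * d : ℕ) * x)
      = ∫ x in (0:ℝ)..1, G (d * x) := integral_congr fun x _ => by
    simp only [G]
    push_cast
    ring_nf
  rw [hscale, hG.intervalIntegral_comp_natCast_mul
      (intervalIntegrable_saw_comp_mul_saw_comp (by fun_prop) (by fun_prop)) hd.ne',
    integral_saw_mul_saw_of_coprime ha' hb' hco, Nat.gcd_mul_right, hco.gcd_eq_one, one_mul]
  push_cast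
  field_simp
end

section
/- For every positive integer a, ∫₀¹ ((ax))((x))⁷ dx = (-48 + 80a² - 42a⁴ + 15a⁶)/(11520a⁷). -/
open Real MeasureTheory Set

/-!
On each interval `(k/a, (k+1)/a)` the integrand is the polynomial `(a x - k - 1/2) (x - 1/2)^7`,
so the integral is a sum over `k < a` of explicit polynomial integrals in `k` and `a`. That sum is
a polynomial identity in the number of terms, proved by induction once `a` is decoupled from
the summation range.
-/

theorem intervalIntegral.integral_eq_sum_of_eqOn_Ioo {E : Type*} [NormedAddCommGroup E]
    [NormedSpace ℝ E] {μ : Measure ℝ} [NullSingletonClass μ] {f : ℝ → E} {g : ℕ → ℝ → E}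
    {b : ℕ → ℝ} {n : ℕ} (hb : Monotone b)
    (hg : ∀ k < n, IntervalIntegrable (g k) μ (b k) (b (k + 1)))
    (hfg : ∀ k < n, EqOn f (g k) (Ioo (b k) (b (k + 1)))) :
    ∫ x in b 0..b n, f x ∂μ = ∑ k ∈ Finset.range n, ∫ x in b k..b (k + 1), g k x ∂μ := by
  rw [← intervalIntegral.sum_integral_adjacent_intervals]
  · refine Finset.sum_congr rfl fun k hk => ?_
    exact intervalIntegral.integral_congr_Ioo_of_le (hb k.le_succ) (hfg k (Finset.mem_range.1 hk))
  · intro k hk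
    refine (hg k hk).congr_uIoo ?_
    rw [uIoo_of_le (hb k.le_succ)]
    exact (hfg k hk).symm

theorem saw_eq_of_mem_Ioo {k : ℤ} {x : ℝ} (hx : x ∈ Ioo (k : ℝ) (k + 1)) :
    saw x = x - k - 1 / 2 := by
  have hfract : Int.fract x = x - k := by
    rw [Int.fract, Int.floor_eq_iff.2 ⟨hx.1.le, hx.2⟩]
  rw [saw, hfract, if_neg (by linarith [hx.1])]

theorem saw_mul_eq_of_mem_Ioo {a : ℝ} (ha : 0 < a) {k : ℤ} {x : ℝ}
    (hx : x ∈ Ioo ((k : ℝ) / a) ((k + 1) / a)) : saw (a * x) = a * x - k - 1 / 2 := by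
  refine saw_eq_of_mem_Ioo ⟨?_, ?_⟩
  · linarith [(div_lt_iff₀ ha).1 hx.1]
  · linarith [(lt_div_iff₀ ha).1 hx.2]

theorem saw_mul_mul_saw_pow_eqOn_Ioo {a k : ℕ} (hk : k < a) (m : ℕ) :
    EqOn (fun x => saw (a * x) * saw x ^ m) (fun x => (a * x - k - 1 / 2) * (x - 1 / 2) ^ m)
      (Ioo ((k : ℝ) / a) ((k + 1) / a)) := by
  intro x hx
  have ha : (0 : ℝ) < a := by exact_mod_cast k.zero_le.trans_lt hk
  have hx01 : x ∈ Ioo ((0 : ℤ) : ℝ) (((0 : ℤ) : ℝ) + 1) := by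
    simpa using Ioo_subset_Ioo (by positivity) ((div_le_one ha).2 (by exact_mod_cast hk)) hx
  have hxk : x ∈ Ioo (((k : ℤ) : ℝ) / a) ((((k : ℤ) : ℝ) + 1) / a) := by simpa using hx
  simp only [saw_mul_eq_of_mem_Ioo ha hxk, saw_eq_of_mem_Ioo hx01]
  push_cast
  ring

/-- `sawPieceIntegral u = ∫ y in u..u+1, (y - u - 1/2) * y ^ 7`. -/
noncomputable def sawPieceIntegral (u : ℝ) : ℝ :=
  ((u + 1) ^ 9 - u ^ 9) / 9 - (u + 1 / 2) * ((u + 1) ^ 8 - u ^ 8) / 8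

theorem integral_sawPiece {a : ℝ} (ha : a ≠ 0) (k : ℝ) :
    ∫ x in k / a..(k + 1) / a, (a * x - k - 1 / 2) * (x - 1 / 2) ^ 7 =
      sawPieceIntegral (k - a / 2) / a ^ 8 := by
  have hderiv : ∀ x : ℝ, HasDerivAt
      (fun x => a / 9 * (x - 1 / 2) ^ 9 - (k - a / 2 + 1 / 2) / 8 * (x - 1 / 2) ^ 8)
      ((a * x - k - 1 / 2) * (x - 1 / 2) ^ 7) x := by
    intro x
    have hlin : HasDerivAt (fun x : ℝ => x - 1 / 2) 1 x := (hasDerivAt_id x).sub_const _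
    refine (((hlin.pow 9).const_mul (a / 9)).sub
      ((hlin.pow 8).const_mul ((k - a / 2 + 1 / 2) / 8))).congr_deriv ?_
    push_cast
    ring
  rw [intervalIntegral.integral_eq_sub_of_hasDerivAt (fun x _ => hderiv x)
    ((by fun_prop : Continuous fun x : ℝ =>
      (a * x - k - 1 / 2) * (x - 1 / 2) ^ 7).intervalIntegrable _ _), sawPieceIntegral]
  field_simp
  ring

theorem sum_range_sawPieceIntegral (c : ℝ) (n : ℕ) :
    ∑ k ∈ Finset.range n, sawPieceIntegral (k - c / 2) =
      -(n : ℝ) / 240 + (n : ℝ) ^ 3 / 36 - 7 * (n : ℝ) ^ 5 / 120 + (n : ℝ) ^ 7 / 12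
        + c * (-(n : ℝ) ^ 2 / 24 + 7 * (n : ℝ) ^ 4 / 48 - 7 * (n : ℝ) ^ 6 / 24)
        + c ^ 2 * ((n : ℝ) / 48 - 7 * (n : ℝ) ^ 3 / 48 + 7 * (n : ℝ) ^ 5 / 16)
        + c ^ 3 * (7 * (n : ℝ) ^ 2 / 96 - 35 * (n : ℝ) ^ 4 / 96)
        + c ^ 4 * (-7 * (n : ℝ) / 384 + 35 * (n : ℝ) ^ 3 / 192)
        + c ^ 5 * (-7 * (n : ℝ) ^ 2 / 128)
        + c ^ 6 * (7 * (n : ℝ) / 768) := by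
  induction n with
  | zero => simp
  | succ n ih =>
    rw [Finset.sum_range_succ, ih, sawPieceIntegral]
    push_cast
    ring

theorem franel_a1x7 (a : ℕ) (ha : 0 < a) :
    ∫ x in (0:ℝ)..1, saw (a * x) * (saw x)^7 =
      (-48 + 80 * (a:ℝ)^2 - 42 * (a:ℝ)^4 + 15 * (a:ℝ)^6) / (11520 * (a:ℝ)^7) := by
  have ha' : (0 : ℝ) < a := by exact_mod_cast ha
  have hsplit := intervalIntegral.integral_eq_sum_of_eqOn_Ioo (μ := volume) (n := a)
    (b := fun k : ℕ => (k : ℝ) / a)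
    (fun i j hij => div_le_div_of_nonneg_right (by exact_mod_cast hij) ha'.le)
    (fun k _ => (by fun_prop : Continuous fun x : ℝ =>
      (a * x - k - 1 / 2) * (x - 1 / 2) ^ 7).intervalIntegrable _ _)
    (fun k hk => by simpa using saw_mul_mul_saw_pow_eqOn_Ioo hk 7)
  simp only [Nat.cast_zero, zero_div, div_self ha'.ne', Nat.cast_succ] at hsplit
  rw [hsplit]
  simp only [integral_sawPiece ha'.ne', ← Finset.sum_div, sum_range_sawPieceIntegral]
  field_simp
  ring
end
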